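/- Suppose Q_f is irreducible and m(Q_f) < c (i.e., Q_f ∈ I_1). If p* ∈ D minimizes θ̄ over D, then p* is irreducible and m(p*) ≤ c; that is, the unique stationary distribution π of p* satisfies Σ_i π_i·r_i ≤ c, so p* ∈ I_4 = I_1 ∪ I_3. -/

import Mathlib

/-!
Since `p*` is positive wherever `Q_f` is, it inherits irreducibility from `Q_f`. Suppose its
stationary mean exceeded `c`. Then `p* ≠ Q_f`, and since stationary distributions of irreducible
chains exist, are unique (Perron–Frobenius) and hence depend continuously on the chain, some mixture
`p_t = (1 - t) p* + t Q_f` with `t ∈ (0, 1)` still has stationary mean at least `c`. For such a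
chain, Jensen's inequality applied to the Perron eigenvector of `Π_θ` gives
`Λ(θ) ≥ θ · m ≥ θ · c`, so `θ* = 0` at `p*` and at `p_t`, and `θ̄` reduces to `Î₃` there.
But `Î₃` is a nonnegative relative entropy that vanishes at `Q_f` and is strictly convex along
the segment, so `Î₃(p_t) < (1 - t) Î₃(p*) ≤ Î₃(p*)`, contradicting minimality of `p*`.
-/

open scoped BigOperators Classical
open Filter

noncomputable section

def IsRowStochastic {M : ℕ} (P : Matrix (Fin M) (Fin M) ℝ) : Prop :=
  (∀ i j, 0 ≤ P i j) ∧ ∀ i, ∑ j, P i j = 1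

def IsIrreducibleMat {M : ℕ} (P : Matrix (Fin M) (Fin M) ℝ) : Prop :=
  ∀ i j, ∃ n : ℕ, 1 ≤ n ∧ 0 < (P ^ n) i j

def IsStationaryDistr {M : ℕ} (P : Matrix (Fin M) (Fin M) ℝ) (π : Fin M → ℝ) : Prop :=
  (∀ i, 0 ≤ π i) ∧ (∑ i, π i = 1) ∧ ∀ j, ∑ i, π i * P i j = π j

def PiMat {M : ℕ} (r : Fin M → ℝ) (θ : ℝ) (A : Matrix (Fin M) (Fin M) ℝ) :
    Matrix (Fin M) (Fin M) ℝ :=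
  Matrix.of fun i j => A i j * Real.exp (θ * r j)

def LambdaA {M : ℕ} (r : Fin M → ℝ) (θ : ℝ) (A : Matrix (Fin M) (Fin M) ℝ) : ℝ :=
  Real.log ((spectralRadius ℝ (PiMat r θ A)).toReal)

def thetaStar {M : ℕ} (r : Fin M → ℝ) (c : ℝ) (A : Matrix (Fin M) (Fin M) ℝ) : ℝ :=
  sSup ({0} ∪ {θ : ℝ | 0 < θ ∧ LambdaA r θ A < θ * c})

def q1 {M : ℕ} (q : Fin M → Fin M → ℝ) (i : Fin M) : ℝ := ∑ j, q i j

def qf {M : ℕ} (q : Fin M → Fin M → ℝ) (i j : Fin M) : ℝ := q i j / q1 q i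

def Qf {M : ℕ} (q : Fin M → Fin M → ℝ) : Matrix (Fin M) (Fin M) ℝ :=
  Matrix.of fun i j => qf q i j

def Dset {M : ℕ} (q : Fin M → Fin M → ℝ) : Set (Matrix (Fin M) (Fin M) ℝ) :=
  {p | IsRowStochastic p ∧ ∀ i j, 0 < q i j → 0 < p i j}

def I3hat {M : ℕ} (q : Fin M → Fin M → ℝ) (p : Matrix (Fin M) (Fin M) ℝ) : ℝ :=
  ∑ i, q1 q i * ∑ j ∈ Finset.univ.filter (fun j => 0 < q i j),
    qf q i j * Real.log (qf q i j / p i j)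

def thetaBar {M : ℕ} (r : Fin M → ℝ) (c : ℝ) (q : Fin M → Fin M → ℝ) (l s : ℝ)
    (p : Matrix (Fin M) (Fin M) ℝ) : ℝ :=
  l * s * thetaStar r c p + I3hat q p

def I1set {M : ℕ} (r : Fin M → ℝ) (c : ℝ) : Set (Matrix (Fin M) (Fin M) ℝ) :=
  {P | IsRowStochastic P ∧ IsIrreducibleMat P ∧ ∃ π, IsStationaryDistr P π ∧ ∑ i, π i * r i < c}

def I2set {M : ℕ} (r : Fin M → ℝ) (c : ℝ) : Set (Matrix (Fin M) (Fin M) ℝ) :=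
  {P | IsRowStochastic P ∧ IsIrreducibleMat P ∧ ∃ π, IsStationaryDistr P π ∧ c < ∑ i, π i * r i}

def I3set {M : ℕ} (r : Fin M → ℝ) (c : ℝ) : Set (Matrix (Fin M) (Fin M) ℝ) :=
  {P | IsRowStochastic P ∧ IsIrreducibleMat P ∧ ∃ π, IsStationaryDistr P π ∧ ∑ i, π i * r i = c}

def toMat {M : ℕ} (x : EuclideanSpace ℝ (Fin M × Fin M)) : Matrix (Fin M) (Fin M) ℝ :=
  Matrix.of fun i j => x (i, j)

def toEuc {M : ℕ} (A : Matrix (Fin M) (Fin M) ℝ) : EuclideanSpace ℝ (Fin M × Fin M) :=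
  (WithLp.equiv 2 ((Fin M × Fin M) → ℝ)).symm (fun ij => A ij.1 ij.2)

def frobInner {M : ℕ} (A B : Matrix (Fin M) (Fin M) ℝ) : ℝ := ∑ i, ∑ j, A i j * B i j


section NonnegMatrix

open Matrix

variable {M : ℕ}

lemma pow_apply_pos_of_support_subset {A B : Matrix (Fin M) (Fin M) ℝ}
    (hA : ∀ i j, 0 ≤ A i j) (hB : ∀ i j, 0 ≤ B i j) (hAB : ∀ i j, 0 < A i j → 0 < B i j)
    (n : ℕ) (i j : Fin M) (h : 0 < (A ^ n) i j) : 0 < (B ^ n) i j := by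
  induction n generalizing j with
  | zero => simpa using h
  | succ n ih =>
    rw [pow_succ, mul_apply, Finset.sum_pos_iff_of_nonneg
      fun k _ => mul_nonneg (pow_apply_nonneg hA n i k) (hA k j)] at h
    obtain ⟨k, -, hk⟩ := h
    rw [pow_succ, mul_apply]
    refine Finset.sum_pos' (fun l _ => mul_nonneg (pow_apply_nonneg hB n i l) (hB l j))
      ⟨k, Finset.mem_univ k, mul_pos (ih k (pos_of_mul_pos_left hk (hA k j)))
        (hAB k j (pos_of_mul_pos_right hk (pow_apply_nonneg hA n i k)))⟩

lemma IsIrreducibleMat.of_support_subset {A B : Matrix (Fin M) (Fin M) ℝ}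
    (hA : ∀ i j, 0 ≤ A i j) (hB : ∀ i j, 0 ≤ B i j) (hAB : ∀ i j, 0 < A i j → 0 < B i j)
    (hirr : IsIrreducibleMat A) : IsIrreducibleMat B := fun i j =>
  let ⟨n, hn, hpos⟩ := hirr i j
  ⟨n, hn, pow_apply_pos_of_support_subset hA hB hAB n i j hpos⟩

lemma IsIrreducibleMat.transpose {A : Matrix (Fin M) (Fin M) ℝ} (h : IsIrreducibleMat A) :
    IsIrreducibleMat Aᵀ := fun i j =>
  let ⟨n, hn, hpos⟩ := h j i
  ⟨n, hn, by rwa [← transpose_pow, transpose_apply]⟩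

lemma IsIrreducibleMat.ne_zero [NeZero M] {A : Matrix (Fin M) (Fin M) ℝ}
    (h : IsIrreducibleMat A) : A ≠ 0 := by
  rintro rfl
  obtain ⟨n, hn, hpos⟩ := h 0 0
  rw [zero_pow (by omega)] at hpos
  exact hpos.false

lemma IsIrreducibleMat.exists_sum_pow_pos {A : Matrix (Fin M) (Fin M) ℝ}
    (hA : ∀ i j, 0 ≤ A i j) (hirr : IsIrreducibleMat A) :
    ∃ N : ℕ, ∀ i j, 0 < (∑ k ∈ Finset.range (N + 1), A ^ k) i j := by
  choose n _ hpos using hirr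
  refine ⟨Finset.univ.sup fun ij : Fin M × Fin M => n ij.1 ij.2, fun i j => ?_⟩
  rw [Matrix.sum_apply]
  refine Finset.sum_pos' (fun k _ => pow_apply_nonneg hA k i j) ⟨n i j, ?_, hpos i j⟩
  exact Finset.mem_range_succ_iff.mpr
    (Finset.le_sup (f := fun ij : Fin M × Fin M => n ij.1 ij.2) (Finset.mem_univ (i, j)))

lemma mulVec_pos_of_pos {B : Matrix (Fin M) (Fin M) ℝ} (hB : ∀ i j, 0 < B i j)
    {v : Fin M → ℝ} (hv : ∀ i, 0 ≤ v i) (hv0 : v ≠ 0) (i : Fin M) : 0 < (B *ᵥ v) i := by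
  obtain ⟨j, hj⟩ := Function.ne_iff.mp hv0
  exact Finset.sum_pos' (fun k _ => mul_nonneg (hB i k).le (hv k))
    ⟨j, Finset.mem_univ j, mul_pos (hB i j) ((hv j).lt_of_ne' hj)⟩

end NonnegMatrix

section Perron

open Matrix

variable {M : ℕ}

lemma exists_pos_smul_le [NeZero M] {w u : Fin M → ℝ} (hw : ∀ i, 0 < w i) (hu : ∀ i, 0 < u i) :
    ∃ ε > 0, ∀ i, ε * w i ≤ u i := by
  obtain ⟨i₀, hi₀⟩ := Finite.exists_min fun i => u i / w i
  exact ⟨u i₀ / w i₀, div_pos (hu i₀) (hw i₀), fun i => (le_div_iff₀ (hw i)).mp (hi₀ i)⟩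

lemma le_sum_of_smul_le_mulVec {A : Matrix (Fin M) (Fin M) ℝ} (hA : ∀ i j, 0 ≤ A i j)
    {t : ℝ} {x : Fin M → ℝ} (hx : x ∈ stdSimplex ℝ (Fin M)) (h : ∀ i, t * x i ≤ (A *ᵥ x) i) :
    t ≤ ∑ i, ∑ j, A i j := by
  calc t = ∑ i, t * x i := by rw [← Finset.mul_sum, hx.2, mul_one]
    _ ≤ ∑ i, (A *ᵥ x) i := Finset.sum_le_sum fun i _ => h i
    _ = ∑ i, ∑ j, A i j * x j := rfl
    _ ≤ ∑ i, ∑ j, A i j := Finset.sum_le_sum fun i _ => Finset.sum_le_sum fun j _ =>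
          mul_le_of_le_one_right (hA i j) (mem_Icc_of_mem_stdSimplex hx j).2

/-- `lam` is the Collatz–Wielandt number `max_{x ∈ Δ} min_i (A x)_i / x_i`, attained by compactness
of `{(t, x) ∈ [0, ∑ A] × Δ | t • x ≤ A *ᵥ x}`. -/
lemma exists_max_collatzWielandt [NeZero M] {A : Matrix (Fin M) (Fin M) ℝ}
    (hA : ∀ i j, 0 ≤ A i j) :
    ∃ lam ≥ 0, ∃ x ∈ stdSimplex ℝ (Fin M), (∀ i, lam * x i ≤ (A *ᵥ x) i) ∧
      ∀ t (y : Fin M → ℝ), (∀ i, 0 < y i) → (∀ i, t * y i ≤ (A *ᵥ y) i) → t ≤ lam := by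
  set C := ∑ i, ∑ j, A i j
  set K : Set (ℝ × (Fin M → ℝ)) := (Set.Icc 0 C ×ˢ stdSimplex ℝ (Fin M)) ∩
    {p | ∀ i, p.1 * p.2 i ≤ (A *ᵥ p.2) i}
  have hK : IsCompact K := (isCompact_Icc.prod (isCompact_stdSimplex ℝ (Fin M))).inter_right <| by
    simp only [Set.ofPred_forall]
    exact isClosed_iInter fun i => isClosed_le (by fun_prop) ((continuous_apply i).comp
      (Continuous.matrix_mulVec continuous_const continuous_snd))
  set u : Fin M → ℝ := fun _ => (M : ℝ)⁻¹
  have hu : u ∈ stdSimplex ℝ (Fin M) :=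
    ⟨fun _ => by positivity, by simp [u, Finset.card_univ, NeZero.ne]⟩
  have hC : 0 ≤ C := Finset.sum_nonneg fun i _ => Finset.sum_nonneg fun j _ => hA i j
  have h0K : ((0 : ℝ), u) ∈ K := ⟨⟨⟨le_rfl, hC⟩, hu⟩, fun i => by
    rw [zero_mul]
    exact Finset.sum_nonneg (s := Finset.univ) fun j _ => mul_nonneg (hA i j) (hu.1 j)⟩
  obtain ⟨⟨lam, x⟩, ⟨⟨hlam, hx⟩, hAx⟩, hmax⟩ :=
    hK.exists_isMaxOn ⟨_, h0K⟩ continuous_fst.continuousOn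
  refine ⟨lam, hlam.1, x, hx, hAx, fun t y hy hAy => ?_⟩
  rcases lt_or_ge t 0 with ht | ht
  · exact ht.le.trans hlam.1
  set s := ∑ i, y i
  have hs : 0 < s := Finset.sum_pos (fun i _ => hy i) Finset.univ_nonempty
  have hys : s⁻¹ • y ∈ stdSimplex ℝ (Fin M) :=
    ⟨fun i => by simpa using mul_nonneg (inv_nonneg.mpr hs.le) (hy i).le, by
      simp [← Finset.mul_sum, s, hs.ne']⟩
  have hAys : ∀ i, t * (s⁻¹ • y) i ≤ (A *ᵥ (s⁻¹ • y)) i := fun i => by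
    simpa [mulVec_smul, mul_left_comm t] using
      mul_le_mul_of_nonneg_left (hAy i) (inv_nonneg.mpr hs.le)
  exact hmax (show (t, s⁻¹ • y) ∈ K from
    ⟨⟨⟨ht, le_sum_of_smul_le_mulVec hA hys hAys⟩, hys⟩, hAys⟩)

lemma eq_zero_of_mulVec_eq_zero {A : Matrix (Fin M) (Fin M) ℝ} (hA : ∀ i j, 0 ≤ A i j)
    {w : Fin M → ℝ} (hw : ∀ i, 0 < w i) (h : A *ᵥ w = 0) : A = 0 := by
  ext i j
  have hterms := (Finset.sum_eq_zero_iff_of_nonneg (s := Finset.univ)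
    fun k _ => mul_nonneg (hA i k) (hw k).le).mp (congrFun h i) j (Finset.mem_univ j)
  exact (mul_eq_zero.mp hterms).resolve_right (hw j).ne'

theorem exists_pos_mulVec_eq_smul [NeZero M] {A : Matrix (Fin M) (Fin M) ℝ}
    (hA : ∀ i j, 0 ≤ A i j) (hirr : IsIrreducibleMat A) :
    ∃ lam > (0 : ℝ), ∃ w : Fin M → ℝ, (∀ i, 0 < w i) ∧ A *ᵥ w = lam • w := by
  obtain ⟨lam, hlam, x, hx, hAx, hmax⟩ := exists_max_collatzWielandt hA
  obtain ⟨N, hB⟩ := hirr.exists_sum_pow_pos hA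
  set B := ∑ k ∈ Finset.range (N + 1), A ^ k
  have hAB : ∀ v, A *ᵥ (B *ᵥ v) = B *ᵥ (A *ᵥ v) := fun v => by
    simp only [mulVec_mulVec, B, Finset.mul_sum, Finset.sum_mul, ← pow_succ, ← pow_succ']
  have hBx : ∀ i, 0 < (B *ᵥ x) i :=
    mulVec_pos_of_pos hB hx.1 fun h => by simpa [h] using hx.2
  -- `x` is an eigenvector: otherwise `B *ᵥ x` would beat the maximal value `lam`
  have hAx_eq : A *ᵥ x = lam • x := by
    by_contra hne
    have hy : ∀ i, 0 ≤ (A *ᵥ x - lam • x) i := fun i => by simpa using hAx i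
    obtain ⟨ε, hε, hεle⟩ := exists_pos_smul_le hBx (mulVec_pos_of_pos hB hy (sub_ne_zero.mpr hne))
    have hstep : ∀ i, (lam + ε) * (B *ᵥ x) i ≤ (A *ᵥ (B *ᵥ x)) i := fun i => by
      have := hεle i
      simp only [mulVec_sub, mulVec_smul, hAB] at this ⊢
      simp only [Pi.sub_apply, Pi.smul_apply, smul_eq_mul] at this
      linarith
    linarith [hmax _ _ hBx hstep]
  have hAw : A *ᵥ (B *ᵥ x) = lam • (B *ᵥ x) := by rw [hAB, hAx_eq, mulVec_smul]
  refine ⟨lam, hlam.lt_of_ne' fun h0 => hirr.ne_zero ?_, B *ᵥ x, hBx, hAw⟩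
  exact eq_zero_of_mulVec_eq_zero hA hBx (by rw [hAw, h0, zero_smul])

end Perron

section Stationary

open Matrix

variable {M : ℕ} {P : Matrix (Fin M) (Fin M) ℝ} {π : Fin M → ℝ}

lemma IsStationaryDistr.neZero (hπ : IsStationaryDistr P π) : NeZero M :=
  ⟨by rintro rfl; simpa using hπ.2.1⟩

lemma IsStationaryDistr.vecMul_eq (hπ : IsStationaryDistr P π) : π ᵥ* P = π :=
  funext hπ.2.2

lemma vecMul_pow_eq_of_vecMul_eq {v : Fin M → ℝ} (h : v ᵥ* P = v) (n : ℕ) : v ᵥ* P ^ n = v := by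
  induction n with
  | zero => simp
  | succ n ih => rw [pow_succ, ← vecMul_vecMul, ih, h]

lemma IsRowStochastic.sum_vecMul (hP : IsRowStochastic P) (v : Fin M → ℝ) :
    ∑ j, (v ᵥ* P) j = ∑ i, v i := by
  simp only [vecMul, dotProduct]
  rw [Finset.sum_comm]
  simp [← Finset.mul_sum, hP.2]

lemma pos_of_vecMul_eq (hP : ∀ i j, 0 ≤ P i j) (hirr : IsIrreducibleMat P) {v : Fin M → ℝ}
    (hv : ∀ i, 0 ≤ v i) (hvP : v ᵥ* P = v) (hv0 : v ≠ 0) (j : Fin M) : 0 < v j := by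
  obtain ⟨i, hi⟩ := Function.ne_iff.mp hv0
  obtain ⟨n, -, hn⟩ := hirr i j
  rw [← vecMul_pow_eq_of_vecMul_eq hvP n]
  exact Finset.sum_pos' (fun k _ => mul_nonneg (hv k) (pow_apply_nonneg hP n k j))
    ⟨i, Finset.mem_univ i, mul_pos ((hv i).lt_of_ne' hi) hn⟩

lemma IsStationaryDistr.pos (hP : ∀ i j, 0 ≤ P i j) (hirr : IsIrreducibleMat P)
    (hπ : IsStationaryDistr P π) (j : Fin M) : 0 < π j :=
  pos_of_vecMul_eq hP hirr hπ.1 hπ.vecMul_eq (fun h => by simpa [h] using hπ.2.1) j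

theorem IsStationaryDistr.unique (hP : ∀ i j, 0 ≤ P i j) (hirr : IsIrreducibleMat P)
    {π' : Fin M → ℝ} (hπ : IsStationaryDistr P π) (hπ' : IsStationaryDistr P π') : π = π' := by
  have := hπ.neZero
  have hπ'pos := hπ'.pos hP hirr
  obtain ⟨i₀, hi₀⟩ := Finite.exists_min fun i => π i / π' i
  set t := π i₀ / π' i₀
  -- `π - t • π'` is nonnegative, invariant and vanishes at `i₀`, hence it is zero
  have hv : ∀ i, 0 ≤ (π - t • π') i := fun i => by
    simpa [sub_nonneg] using (le_div_iff₀ (hπ'pos i)).mp (hi₀ i)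
  have hvP : (π - t • π') ᵥ* P = π - t • π' := by
    rw [sub_vecMul, smul_vecMul, hπ.vecMul_eq, hπ'.vecMul_eq]
  have hv₀ : ¬ 0 < (π - t • π') i₀ := by
    simp [t, div_mul_cancel₀ _ (hπ'pos i₀).ne']
  have hπt : π = t • π' :=
    sub_eq_zero.mp (by_contra fun h => hv₀ (pos_of_vecMul_eq hP hirr hv hvP h i₀))
  have ht : 1 = t := by
    simpa [hπ.2.1, hπ'.2.1, ← Finset.mul_sum] using congrArg (fun v => ∑ i, v i) hπt
  rw [hπt, ← ht, one_smul]

theorem exists_isStationaryDistr [NeZero M] (hP : IsRowStochastic P) (hirr : IsIrreducibleMat P) :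
    ∃ π, IsStationaryDistr P π := by
  obtain ⟨lam, -, w, hw, hwP⟩ :=
    exists_pos_mulVec_eq_smul (A := Pᵀ) (fun i j => hP.1 j i) hirr.transpose
  rw [mulVec_transpose] at hwP
  have hs : 0 < ∑ i, w i := Finset.sum_pos (fun i _ => hw i) Finset.univ_nonempty
  have hlam : lam = 1 := by
    have := hP.sum_vecMul w
    rw [hwP] at this
    simp only [Pi.smul_apply, smul_eq_mul, ← Finset.mul_sum] at this
    exact (mul_eq_right₀ hs.ne').mp this
  refine ⟨(∑ i, w i)⁻¹ • w, fun i => by simpa using mul_nonneg (inv_nonneg.mpr hs.le) (hw i).le,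
    by simp [← Finset.mul_sum, hs.ne'], congrFun ?_⟩
  change ((∑ i, w i)⁻¹ • w) ᵥ* P = _
  rw [smul_vecMul, hwP, hlam, one_smul]

end Stationary

section Continuity

open Matrix Topology

variable {M : ℕ} {P : Matrix (Fin M) (Fin M) ℝ} {π : Fin M → ℝ}

theorem exists_subseq_tendsto_isStationaryDistr (hP : ∀ i j, 0 ≤ P i j)
    (hirr : IsIrreducibleMat P) (hπ : IsStationaryDistr P π) {Pn : ℕ → Matrix (Fin M) (Fin M) ℝ}
    (hPn : Tendsto Pn atTop (𝓝 P)) {πn : ℕ → Fin M → ℝ}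
    (hπn : ∀ n, IsStationaryDistr (Pn n) (πn n)) :
    ∃ φ : ℕ → ℕ, StrictMono φ ∧ Tendsto (πn ∘ φ) atTop (𝓝 π) := by
  obtain ⟨x, hx, φ, hφ, hlim⟩ := (isCompact_stdSimplex ℝ (Fin M)).tendsto_subseq
    fun n => (⟨(hπn n).1, (hπn n).2.1⟩ : πn n ∈ stdSimplex ℝ (Fin M))
  have hvecMul : Tendsto (fun n => πn (φ n) ᵥ* Pn (φ n)) atTop (𝓝 (x ᵥ* P)) :=
    ((continuous_fst.matrix_vecMul continuous_snd).tendsto (x, P)).comp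
      (hlim.prodMk_nhds (hPn.comp hφ.tendsto_atTop))
  simp only [(hπn _).vecMul_eq] at hvecMul
  have hx_stat : IsStationaryDistr P x := ⟨hx.1, hx.2, congrFun (tendsto_nhds_unique hvecMul hlim)⟩
  exact ⟨φ, hφ, hx_stat.unique hP hirr hπ ▸ hlim⟩

lemma IsRowStochastic.convexComb {Q : Matrix (Fin M) (Fin M) ℝ} (hP : IsRowStochastic P)
    (hQ : IsRowStochastic Q) {t : ℝ} (ht₀ : 0 ≤ t) (ht₁ : t ≤ 1) :
    IsRowStochastic ((1 - t) • P + t • Q) := by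
  refine ⟨fun i j => ?_, fun i => ?_⟩
  · simp only [Matrix.add_apply, Matrix.smul_apply, smul_eq_mul]
    have := hP.1 i j
    have := hQ.1 i j
    positivity
  · simp [Finset.sum_add_distrib, ← Finset.mul_sum, hP.2 i, hQ.2 i]

lemma IsIrreducibleMat.convexComb {Q : Matrix (Fin M) (Fin M) ℝ} (hP : IsRowStochastic P)
    (hQ : IsRowStochastic Q) (hirr : IsIrreducibleMat P) {t : ℝ} (ht₀ : 0 ≤ t) (ht₁ : t < 1) :
    IsIrreducibleMat ((1 - t) • P + t • Q) :=
  hirr.of_support_subset hP.1 (hP.convexComb hQ ht₀ ht₁.le).1 fun i j h => by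
    simp only [Matrix.add_apply, Matrix.smul_apply, smul_eq_mul]
    have := hQ.1 i j
    have : 0 < 1 - t := sub_pos.mpr ht₁
    positivity

theorem exists_convexComb_le_stationary_mean (hP : IsRowStochastic P) (hirr : IsIrreducibleMat P)
    (hπ : IsStationaryDistr P π) {Q : Matrix (Fin M) (Fin M) ℝ} (hQ : IsRowStochastic Q)
    {r : Fin M → ℝ} {c : ℝ} (hc : c < ∑ i, π i * r i) :
    ∃ t ∈ Set.Ioo (0 : ℝ) 1, ∃ π', IsStationaryDistr ((1 - t) • P + t • Q) π' ∧
      c ≤ ∑ i, π' i * r i := by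
  have := hπ.neZero
  by_contra! hlt
  set t : ℕ → ℝ := fun n => ((n : ℝ) + 2)⁻¹
  have ht : ∀ n, t n ∈ Set.Ioo (0 : ℝ) 1 := fun n =>
    ⟨by positivity, inv_lt_one_of_one_lt₀ (by linarith [n.cast_nonneg' (α := ℝ)])⟩
  have hstat : ∀ n, ∃ π', IsStationaryDistr ((1 - t n) • P + t n • Q) π' := fun n =>
    exists_isStationaryDistr (hP.convexComb hQ (ht n).1.le (ht n).2.le)
      (hirr.convexComb hP hQ (ht n).1.le (ht n).2)
  choose πn hπn using hstat
  have htlim : Tendsto t atTop (𝓝 0) :=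
    tendsto_inv_atTop_zero.comp (tendsto_atTop_add_const_right _ 2 tendsto_natCast_atTop_atTop)
  have hPn : Tendsto (fun n => (1 - t n) • P + t n • Q) atTop (𝓝 P) := by
    simpa using
      (((tendsto_const_nhds (x := (1 : ℝ))).sub htlim).smul_const P).add (htlim.smul_const Q)
  obtain ⟨φ, -, hφ⟩ := exists_subseq_tendsto_isStationaryDistr hP.1 hirr hπ hPn hπn
  have hmean : Tendsto (fun n => ∑ i, πn (φ n) i * r i) atTop (𝓝 (∑ i, π i * r i)) :=
    tendsto_finsetSum _ fun i _ => ((continuous_apply i).tendsto π |>.comp hφ).mul_const (r i)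
  exact (le_of_tendsto hmean
    (Eventually.of_forall fun n => (hlt _ (ht (φ n)) _ (hπn _)).le)).not_gt hc

end Continuity

section SpectralRadius

open Matrix

variable {n : Type*} [Fintype n] [DecidableEq n]

lemma Matrix.spectralRadius_ne_top (A : Matrix n n ℝ) : spectralRadius ℝ A ≠ ⊤ :=
  ne_top_of_le_ne_top ENNReal.coe_ne_top <| iSup₂_le fun _ hk => ENNReal.coe_le_coe.mpr <|
    Finset.le_sup (f := (‖·‖₊)) ((Matrix.finite_spectrum A).mem_toFinset.mpr hk)

lemma Matrix.le_spectralRadius_toReal_of_mulVec_eq {A : Matrix n n ℝ} {w : n → ℝ} (hw : w ≠ 0)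
    {μ : ℝ} (hμ : 0 ≤ μ) (h : A *ᵥ w = μ • w) : μ ≤ (spectralRadius ℝ A).toReal := by
  have hmem : μ ∈ spectrum ℝ A := by
    rw [← Matrix.spectrum_toLin']
    exact Module.End.HasEigenvalue.mem_spectrum <| Module.End.hasEigenvalue_of_hasEigenvector
      ⟨by rwa [Module.End.mem_eigenspace_iff, Matrix.toLin'_apply], hw⟩
  have hle : (‖μ‖₊ : ENNReal) ≤ spectralRadius ℝ A :=
    le_iSup₂ (f := fun k _ => (‖k‖₊ : ENNReal)) μ hmem
  simpa [abs_of_nonneg hμ] using ENNReal.toReal_mono A.spectralRadius_ne_top hle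

end SpectralRadius

section ThetaStar

open Matrix

variable {M : ℕ} {P : Matrix (Fin M) (Fin M) ℝ} {π : Fin M → ℝ}

/-- Jensen's inequality along each row of `P`, averaged against `π`. -/
lemma mul_mean_le_log_of_mulVec_eq (hP : IsRowStochastic P) (hπ : IsStationaryDistr P π)
    (r : Fin M → ℝ) (θ : ℝ) {lam : ℝ} (hlam : 0 < lam) {w : Fin M → ℝ} (hw : ∀ i, 0 < w i)
    (h : PiMat r θ P *ᵥ w = lam • w) : θ * ∑ i, π i * r i ≤ Real.log lam := by
  set f : Fin M → ℝ := fun j => θ * r j + Real.log (w j)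
  have hrow : P *ᵥ f ≤ fun i => Real.log lam + Real.log (w i) := fun i => by
    have hjensen := strictConcaveOn_log_Ioi.concaveOn.le_map_sum (t := Finset.univ)
      (p := fun j => Real.exp (θ * r j) * w j) (fun j _ => hP.1 i j) (hP.2 i)
      fun j _ => mul_pos (Real.exp_pos _) (hw j)
    have hrow_i := congrFun h i
    simp only [mulVec, dotProduct, PiMat, of_apply, Pi.smul_apply, smul_eq_mul, mul_assoc]
      at hrow_i
    simp only [smul_eq_mul, Real.log_mul (Real.exp_ne_zero _) (hw _).ne', Real.log_exp] at hjensen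
    rw [hrow_i, Real.log_mul hlam.ne' (hw i).ne'] at hjensen
    exact hjensen
  have := dotProduct_le_dotProduct_of_nonneg_left hrow fun i => hπ.1 i
  rw [dotProduct_mulVec, hπ.vecMul_eq] at this
  simp only [dotProduct, f, mul_add, Finset.sum_add_distrib, ← Finset.sum_mul, hπ.2.1] at this
  rw [Finset.mul_sum]
  linarith [Finset.sum_congr rfl fun i (_ : i ∈ Finset.univ) => mul_left_comm (π i) θ (r i)]

theorem mul_mean_le_LambdaA (hP : IsRowStochastic P) (hirr : IsIrreducibleMat P)
    (hπ : IsStationaryDistr P π) (r : Fin M → ℝ) (θ : ℝ) :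
    θ * ∑ i, π i * r i ≤ LambdaA r θ P := by
  have := hπ.neZero
  have hPi : ∀ i j, 0 ≤ PiMat r θ P i j := fun i j => mul_nonneg (hP.1 i j) (Real.exp_pos _).le
  obtain ⟨lam, hlam, w, hw, hPiw⟩ := exists_pos_mulVec_eq_smul hPi <|
    hirr.of_support_subset hP.1 hPi fun i j h => mul_pos h (Real.exp_pos _)
  calc θ * ∑ i, π i * r i ≤ Real.log lam := mul_mean_le_log_of_mulVec_eq hP hπ r θ hlam hw hPiw
    _ ≤ LambdaA r θ P := Real.log_le_log hlam <|
      le_spectralRadius_toReal_of_mulVec_eq (fun h => by simpa [h] using hw 0) hlam.le hPiw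

theorem thetaStar_eq_zero_of_le_mean (hP : IsRowStochastic P) (hirr : IsIrreducibleMat P)
    (hπ : IsStationaryDistr P π) {r : Fin M → ℝ} {c : ℝ} (hc : c ≤ ∑ i, π i * r i) :
    thetaStar r c P = 0 := by
  have hempty : {θ : ℝ | 0 < θ ∧ LambdaA r θ P < θ * c} = ∅ :=
    Set.eq_empty_of_forall_notMem fun θ ⟨hθ, hlt⟩ =>
      hlt.not_ge ((mul_le_mul_of_nonneg_left hc hθ.le).trans (mul_mean_le_LambdaA hP hirr hπ r θ))
  rw [thetaStar, hempty, Set.union_empty, csSup_singleton]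

end ThetaStar

section Divergence

open Matrix

variable {M : ℕ}

lemma IsRowStochastic.eq_of_eq_of_pos {P Q : Matrix (Fin M) (Fin M) ℝ} (hP : IsRowStochastic P)
    (hQ : IsRowStochastic Q) (h : ∀ i j, 0 < Q i j → P i j = Q i j) : P = Q := by
  ext i j
  have hle : ∀ j, Q i j ≤ P i j := fun j =>
    (hQ.1 i j).eq_or_lt.elim (fun h0 => h0 ▸ hP.1 i j) fun hpos => (h i j hpos).ge
  have hsum : ∑ j, (P i j - Q i j) = 0 := by rw [Finset.sum_sub_distrib, hP.2, hQ.2, sub_self]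
  exact sub_eq_zero.mp <| (Finset.sum_eq_zero_iff_of_nonneg fun j _ => sub_nonneg.mpr (hle j)).mp
    hsum j (Finset.mem_univ j)

lemma sub_le_mul_log_div {a b : ℝ} (ha : 0 < a) (hb : 0 < b) : a - b ≤ a * Real.log (a / b) := by
  have := mul_le_mul_of_nonneg_left (Real.one_sub_inv_le_log_of_pos (div_pos ha hb)) ha.le
  rwa [inv_div, mul_sub, mul_one, mul_div_cancel₀ _ ha.ne'] at this

lemma mul_log_div_convexComb_lt {a b t : ℝ} (ha : 0 < a) (hb : 0 < b) (hab : a ≠ b)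
    (ht : t ∈ Set.Ioo (0 : ℝ) 1) :
    b * Real.log (b / ((1 - t) * a + t * b)) < (1 - t) * (b * Real.log (b / a)) := by
  have hconc := strictConcaveOn_log_Ioi.2 ha hb hab (sub_pos.mpr ht.2) ht.1 (by ring)
  simp only [smul_eq_mul] at hconc
  have hm : 0 < (1 - t) * a + t * b := by nlinarith [ht.1, ht.2]
  rw [Real.log_div hb.ne' hm.ne', Real.log_div hb.ne' ha.ne']
  nlinarith [mul_lt_mul_of_pos_left hconc hb]

lemma mul_log_div_convexComb_le {a b t : ℝ} (ha : 0 < a) (hb : 0 < b)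
    (ht : t ∈ Set.Ioo (0 : ℝ) 1) :
    b * Real.log (b / ((1 - t) * a + t * b)) ≤ (1 - t) * (b * Real.log (b / a)) := by
  rcases eq_or_ne a b with rfl | hab
  · simp [← add_mul, hb.ne']
  · exact (mul_log_div_convexComb_lt ha hb hab ht).le

variable {q : Fin M → Fin M → ℝ}

lemma qf_pos_iff (hq1 : ∀ i, 0 < q1 q i) {i j : Fin M} :
    0 < qf q i j ↔ 0 < q i j :=
  div_pos_iff_of_pos_right (hq1 i)

lemma isRowStochastic_Qf (hq0 : ∀ i j, 0 ≤ q i j) (hq1 : ∀ i, 0 < q1 q i) :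
    IsRowStochastic (Qf q) :=
  ⟨fun i j => div_nonneg (hq0 i j) (hq1 i).le, fun i => by
    simp only [Qf, qf, of_apply, ← Finset.sum_div]
    exact div_self (hq1 i).ne'⟩

lemma sum_filter_qf (hq0 : ∀ i j, 0 ≤ q i j) (hq1 : ∀ i, 0 < q1 q i) (i : Fin M) :
    ∑ j ∈ Finset.univ.filter (fun j => 0 < q i j), qf q i j = 1 := by
  refine (Finset.sum_filter_of_ne fun j _ (h : qf q i j ≠ 0) => ?_).trans
    ((isRowStochastic_Qf hq0 hq1).2 i)
  exact (qf_pos_iff hq1).mp ((div_nonneg (hq0 i j) (hq1 i).le).lt_of_ne' h)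

theorem I3hat_nonneg (hq0 : ∀ i j, 0 ≤ q i j) (hq1 : ∀ i, 0 < q1 q i)
    {p : Matrix (Fin M) (Fin M) ℝ} (hp : p ∈ Dset q) : 0 ≤ I3hat q p := by
  refine Finset.sum_nonneg fun i _ => mul_nonneg (hq1 i).le ?_
  set F := Finset.univ.filter (fun j => 0 < q i j)
  calc (0 : ℝ) = ∑ j ∈ F, qf q i j - ∑ j, p i j := by
        rw [sum_filter_qf hq0 hq1, hp.1.2 i, sub_self]
    _ ≤ ∑ j ∈ F, qf q i j - ∑ j ∈ F, p i j := by
        gcongr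
        · exact fun j _ _ => hp.1.1 i j
        · exact Finset.subset_univ F
    _ = ∑ j ∈ F, (qf q i j - p i j) := (Finset.sum_sub_distrib ..).symm
    _ ≤ ∑ j ∈ F, qf q i j * Real.log (qf q i j / p i j) := Finset.sum_le_sum fun j hj => by
        have hqij := (Finset.mem_filter.mp hj).2
        exact sub_le_mul_log_div ((qf_pos_iff hq1).mpr hqij) (hp.2 i j hqij)

lemma convexComb_mem_Dset {p Q : Matrix (Fin M) (Fin M) ℝ} (hp : p ∈ Dset q)
    (hQ : IsRowStochastic Q) {t : ℝ} (ht₀ : 0 ≤ t) (ht₁ : t < 1) :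
    (1 - t) • p + t • Q ∈ Dset q :=
  ⟨hp.1.convexComb hQ ht₀ ht₁.le, fun i j h => by
    simp only [Matrix.add_apply, Matrix.smul_apply, smul_eq_mul]
    have := hp.2 i j h
    have := hQ.1 i j
    have : 0 < 1 - t := sub_pos.mpr ht₁
    positivity⟩

theorem I3hat_convexComb_lt (hq0 : ∀ i j, 0 ≤ q i j) (hq1 : ∀ i, 0 < q1 q i)
    {p : Matrix (Fin M) (Fin M) ℝ} (hp : p ∈ Dset q) (hpq : p ≠ Qf q) {t : ℝ}
    (ht : t ∈ Set.Ioo (0 : ℝ) 1) :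
    I3hat q ((1 - t) • p + t • Qf q) < (1 - t) * I3hat q p := by
  obtain ⟨i₀, j₀, hq₀, hne⟩ : ∃ i j, 0 < q i j ∧ p i j ≠ qf q i j := by
    by_contra! h
    exact hpq <| hp.1.eq_of_eq_of_pos (isRowStochastic_Qf hq0 hq1) fun i j hQ =>
      h i j ((qf_pos_iff hq1).mp hQ)
  have hterm : ∀ i, ∀ j ∈ Finset.univ.filter (fun j => 0 < q i j),
      qf q i j * Real.log (qf q i j / ((1 - t) • p + t • Qf q) i j) ≤
        (1 - t) * (qf q i j * Real.log (qf q i j / p i j)) := fun i j hj => by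
    have hqij := (Finset.mem_filter.mp hj).2
    exact mul_log_div_convexComb_le (hp.2 i j hqij) ((qf_pos_iff hq1).mpr hqij) ht
  have hmem₀ : j₀ ∈ Finset.univ.filter (fun j => 0 < q i₀ j) :=
    Finset.mem_filter.mpr ⟨Finset.mem_univ _, hq₀⟩
  rw [I3hat, I3hat, Finset.mul_sum]
  refine Finset.sum_lt_sum (fun i _ => ?_) ⟨i₀, Finset.mem_univ _, ?_⟩ <;>
    rw [mul_left_comm (1 - t), Finset.mul_sum _ _ (1 - t)]
  · exact mul_le_mul_of_nonneg_left (Finset.sum_le_sum (hterm i)) (hq1 i).le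
  · refine mul_lt_mul_of_pos_left (Finset.sum_lt_sum (hterm i₀) ⟨j₀, hmem₀, ?_⟩) (hq1 i₀)
    exact mul_log_div_convexComb_lt (hp.2 i₀ j₀ hq₀) ((qf_pos_iff hq1).mpr hq₀) hne ht

end Divergence

theorem stmt4_general (M : ℕ) (r : Fin M → ℝ) (c : ℝ) (q : Fin M → Fin M → ℝ)
    (hq0 : ∀ i j, 0 ≤ q i j) (hq1 : ∀ i, 0 < q1 q i) (l s : ℝ)
    (hQfirr : IsIrreducibleMat (Qf q))
    (πq : Fin M → ℝ) (hπq : IsStationaryDistr (Qf q) πq)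
    (hQfmean : ∑ i, πq i * r i < c)
    (pstar : Matrix (Fin M) (Fin M) ℝ) (hpstar : pstar ∈ Dset q)
    (hmin : ∀ p ∈ Dset q, thetaBar r c q l s pstar ≤ thetaBar r c q l s p) :
    IsIrreducibleMat pstar ∧
    ∀ π : Fin M → ℝ, IsStationaryDistr pstar π → ∑ i, π i * r i ≤ c := by
  have hQf := isRowStochastic_Qf hq0 hq1
  have hirr : IsIrreducibleMat pstar := hQfirr.of_support_subset hQf.1 hpstar.1.1
    fun i j h => hpstar.2 i j ((qf_pos_iff hq1).mp h)
  refine ⟨hirr, fun π hπ => le_of_not_gt fun hgt => ?_⟩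
  have hne : pstar ≠ Qf q := by
    rintro rfl
    exact (hπ.unique hQf.1 hQfirr hπq ▸ hQfmean).not_gt hgt
  obtain ⟨t, ht, π', hπ', hmean'⟩ := exists_convexComb_le_stationary_mean hpstar.1 hirr hπ hQf hgt
  have hθ := thetaStar_eq_zero_of_le_mean hpstar.1 hirr hπ hgt.le
  have hθ' := thetaStar_eq_zero_of_le_mean (hpstar.1.convexComb hQf ht.1.le ht.2.le)
    (hirr.convexComb hpstar.1 hQf ht.1.le ht.2) hπ' hmean'
  have hle := hmin _ (convexComb_mem_Dset hpstar hQf ht.1.le ht.2)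
  simp only [thetaBar, hθ, hθ', mul_zero, zero_add] at hle
  nlinarith [I3hat_convexComb_lt hq0 hq1 hpstar hne ht, I3hat_nonneg hq0 hq1 hpstar, ht.1]

theorem stmt4 (M : ℕ) (hM : 2 ≤ M) (r : Fin M → ℝ) (hr : ∀ j, 0 ≤ r j)
    (c : ℝ) (hc : 0 < c)
    (hbdd : ∀ p : Matrix (Fin M) (Fin M) ℝ, IsRowStochastic p →
      BddAbove {θ : ℝ | 0 < θ ∧ LambdaA r θ p < θ * c})
    (q : Fin M → Fin M → ℝ)
    (hq0 : ∀ i j, 0 ≤ q i j) (hqsum : ∑ i, ∑ j, q i j = 1)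
    (hq1 : ∀ i, 0 < q1 q i)
    (l s : ℝ) (hl : 0 < l) (hs : 0 < s)
    (hQfirr : IsIrreducibleMat (Qf q))
    (πq : Fin M → ℝ) (hπq : IsStationaryDistr (Qf q) πq)
    (hQfmean : ∑ i, πq i * r i < c)
    (pstar : Matrix (Fin M) (Fin M) ℝ) (hpstar : pstar ∈ Dset q)
    (hmin : ∀ p ∈ Dset q, thetaBar r c q l s pstar ≤ thetaBar r c q l s p) :
    IsIrreducibleMat pstar ∧
    ∀ π : Fin M → ℝ, IsStationaryDistr pstar π → ∑ i, π i * r i ≤ c :=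
  stmt4_general M r c q hq0 hq1 l s hQfirr πq hπq hQfmean pstar hpstar hmin
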